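/- Let n ≥ 1, let γ_{2n} be the cyclic permutation (1,2,…,2n) of {1,…,2n}, and let I = I_{2n}. Then there is exactly one permutation π of {1,…,2n} satisfying all of: (a) π is a fixed-point-free involution; (b) #(π) + #(π⁻¹γ_{2n}) = 2n+1; and (c) the subgroup generated by π and I acts transitively on {1,…,2n}. Namely, π is the involution with cycles (1,2n), (2,3), (4,5), …, (2n−2,2n−1). -/

import Mathlib

noncomputable def cycleCount {N : ℕ} (π : Equiv.Perm (Fin N)) : ℕ :=
  Set.ncard {O : Set (Fin N) | ∃ x, O = {y | π.SameCycle x y}}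

noncomputable def cyclesIn {N : ℕ} (π : Equiv.Perm (Fin N)) (C : Set (Fin N)) : ℕ :=
  Set.ncard {O : Set (Fin N) | (∃ x, O = {y | π.SameCycle x y}) ∧ O ⊆ C}

/-- The annular permutation `γ_{p,q}` of `{1,…,p+q}` (0-indexed as `Fin (p+q)`),
with the two cycles `(1,…,p)` and `(p+1,…,p+q)`. -/
def annularGamma (p q : ℕ) : Equiv.Perm (Fin (p + q)) :=
  finSumFinEquiv.permCongr ((finRotate p).sumCongr (finRotate q))

/-- The interval involution `I_N = (1 2)(3 4)⋯(N-1 N)` of `{1,…,N}`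
(0-indexed: swaps `2i ↔ 2i+1`), for `N` even. -/
def intervalInvolution (N : ℕ) : Equiv.Perm (Fin N) :=
  Function.Involutive.toPerm
    (fun x => ⟨if x.val % 2 = 0 then min (x.val + 1) (N - 1) else x.val - 1, by
      rcases x with ⟨v, hv⟩
      dsimp only
      split <;> omega⟩)
    (by
      intro x
      rcases x with ⟨v, hv⟩
      apply Fin.ext
      dsimp only
      split_ifs <;> omega)

/-- The subgroup generated by `π` and `ρ` acts transitively on `Fin N`. -/
def JointTrans {N : ℕ} (π ρ : Equiv.Perm (Fin N)) : Prop :=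
  ∀ x y : Fin N, ∃ g ∈ Subgroup.closure ({π, ρ} : Set (Equiv.Perm (Fin N))), g x = y

/-- `α` separates even numbers: no cycle of `α` contains two distinct even numbers
(an element `x : Fin N` represents the number `x.val + 1`). -/
def SeparatesEven {N : ℕ} (α : Equiv.Perm (Fin N)) : Prop :=
  ∀ x y : Fin N, α.SameCycle x y → (x.val + 1) % 2 = 0 → (y.val + 1) % 2 = 0 → x = y

/-- `π ∈ S_NC(p,q)`: annular non-crossing permutations. -/
def AnnularNC (p q : ℕ) (π : Equiv.Perm (Fin (p + q))) : Prop :=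
  JointTrans π (annularGamma p q) ∧
    cycleCount π + cycleCount (π⁻¹ * annularGamma p q) = p + q

/-- `A` witnesses bipartiteness of the graph `G_π`: `π(A) = A` and for each `i`,
exactly one of the (1-indexed) numbers `2i-1`, `2i` belongs to `A`. -/
def BipartSet {N : ℕ} (π : Equiv.Perm (Fin N)) (A : Set (Fin N)) : Prop :=
  (⇑π) '' A = A ∧ ∀ i : ℕ, ∀ h : 2 * i + 1 < N,
    Xor' ((⟨2 * i, Nat.lt_of_succ_lt h⟩ : Fin N) ∈ A) ((⟨2 * i + 1, h⟩ : Fin N) ∈ A)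

/-- The graph `G_π` is bipartite. -/
def GraphBipartite {N : ℕ} (π : Equiv.Perm (Fin N)) : Prop :=
  ∃ A : Set (Fin N), BipartSet π A

/-- `π ∈ J_{2n,2m}`: annular non-crossing, bipartite graph, and `π⁻¹γ` separates even. -/
def memJ (n m : ℕ) (π : Equiv.Perm (Fin (2 * n + 2 * m))) : Prop :=
  AnnularNC (2 * n) (2 * m) π ∧ GraphBipartite π ∧
    SeparatesEven (π⁻¹ * annularGamma (2 * n) (2 * m))


/-!
Multiplying a permutation by a transposition changes its number of cycles by at most one, so
for a pairing `π` of the `2n` points, removing its pairs one at a time gives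
`#(π γ) ≤ #γ + n = n + 1`. If two chords `{a, π a}` and `{c, π c}` crossed, the first
transposition would split `γ` into the two arcs between `a` and `π a` and the second would merge
them again, giving `#(π γ) ≤ n`; so (b) forces every closed arc `[x, π x]` to be `π`-invariant.
Such an arc then has even size, so `x` and `π x` have opposite parities; when `x` is even
(0-indexed), the arc is also a union of blocks of `I`, and transitivity forces it to be the
whole circle, i.e. `π x = x - 1`. This pins down `π = γ I γ⁻¹`. Conversely `γ I` fixes the `n`
odd points, which together with the cycle through `0` gives the `n + 1` cycles needed for (b).
-/

open Equiv Equiv.Perm Function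

variable {N : ℕ}

def cycleSet (f : Perm (Fin N)) (x : Fin N) : Set (Fin N) := {y | f.SameCycle x y}

section CycleCount

theorem ncard_pair_le {α : Type*} (a b : α) : ({a, b} : Set α).ncard ≤ 2 :=
  (Set.ncard_insert_le a {b}).trans (by rw [Set.ncard_singleton])

variable {f g : Perm (Fin N)} {U : Set (Fin N)}

theorem mem_cycleSet_self (f : Perm (Fin N)) (x : Fin N) : x ∈ cycleSet f x := SameCycle.refl f x

theorem cycleSet_eq_of_sameCycle {x y : Fin N} (h : f.SameCycle x y) :
    cycleSet f x = cycleSet f y :=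
  Set.ext fun _ => ⟨h.symm.trans, h.trans⟩

theorem cycleSet_eq_iff {x y : Fin N} : cycleSet f x = cycleSet f y ↔ f.SameCycle x y :=
  ⟨fun h => show y ∈ cycleSet f x from h ▸ mem_cycleSet_self f y, cycleSet_eq_of_sameCycle⟩

theorem cycleCount_eq_ncard_range (f : Perm (Fin N)) :
    cycleCount f = (Set.range (cycleSet f)).ncard := by
  unfold cycleCount
  congr 1
  ext O
  simp [cycleSet, eq_comm]

theorem cycleSet_subset (hU : Set.MapsTo f U U) {x : Fin N} (hx : x ∈ U) : cycleSet f x ⊆ U := by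
  rintro _ hy
  obtain ⟨k, -, rfl⟩ := hy.exists_pow_eq'
  rw [coe_pow]
  exact hU.iterate k hx

theorem preimage_eq_of_mapsTo (hU : Set.MapsTo f U U) : f ⁻¹' U = U := by
  refine Set.Subset.antisymm (fun z hz => ?_) hU
  obtain ⟨w, hw, hwz⟩ := ((U.toFinite.injOn_iff_bijOn_of_mapsTo hU).1 f.injective.injOn).surjOn hz
  rwa [← f.injective hwz]

theorem mapsTo_compl (hU : Set.MapsTo f U U) : Set.MapsTo f Uᶜ Uᶜ :=
  fun _ hz hfz => hz (preimage_eq_of_mapsTo hU ▸ hfz)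

theorem cycleCount_eq_ncard_image_add (hU : Set.MapsTo f U U) :
    cycleCount f = (cycleSet f '' U).ncard + (cycleSet f '' Uᶜ).ncard := by
  rw [cycleCount_eq_ncard_range, ← Set.image_univ, ← Set.union_compl_self U, Set.image_union,
    Set.ncard_union_eq]
  rw [Set.disjoint_left]
  rintro _ ⟨x, hx, rfl⟩ ⟨y, hy, hxy⟩
  exact hy (cycleSet_subset hU hx (hxy ▸ mem_cycleSet_self f y))

theorem cycleSet_subset_of_eqOn (hU : Set.MapsTo f U U) (hfg : Set.EqOn f g U) {x : Fin N}
    (hx : x ∈ U) : cycleSet f x ⊆ cycleSet g x := by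
  rintro _ hy
  obtain ⟨k, -, rfl⟩ := hy.exists_pow_eq'
  refine ⟨k, ?_⟩
  clear hy
  rw [zpow_natCast]
  induction k with
  | zero => simp
  | succ k ih =>
    rw [pow_succ', pow_succ', mul_apply, mul_apply, ih,
      hfg (by rw [coe_pow]; exact hU.iterate k hx)]

theorem image_cycleSet_congr (hU : Set.MapsTo f U U) (hfg : Set.EqOn f g U) :
    cycleSet f '' U = cycleSet g '' U := by
  have hgU : Set.MapsTo g U U := fun z hz => hfg hz ▸ hU hz
  refine Set.image_congr fun x hx => (cycleSet_subset_of_eqOn hU hfg hx).antisymm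
    (cycleSet_subset_of_eqOn hgU hfg.symm hx)

theorem image_cycleSet_cycleSet (f : Perm (Fin N)) (x : Fin N) :
    cycleSet f '' cycleSet f x = {cycleSet f x} :=
  (Set.Nonempty.image_const ⟨x, mem_cycleSet_self f x⟩ _).symm ▸
    Set.image_congr fun _ hy => (cycleSet_eq_of_sameCycle hy).symm

theorem mapsTo_cycleSet_union (f : Perm (Fin N)) (a b : Fin N) :
    Set.MapsTo f (cycleSet f a ∪ cycleSet f b) (cycleSet f a ∪ cycleSet f b) :=
  fun _ hz => hz.imp sameCycle_apply_right.2 sameCycle_apply_right.2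

theorem mapsTo_swap_mul {a b : Fin N} (hU : Set.MapsTo f U U) (ha : a ∈ U) (hb : b ∈ U) :
    Set.MapsTo (swap a b * f) U U := by
  intro z hz
  rw [mul_apply, swap_apply_def]
  split_ifs
  exacts [hb, ha, hU hz]

theorem cycleCount_swap_mul_add_ncard_le (f : Perm (Fin N)) (a b : Fin N) :
    cycleCount (swap a b * f) + ({cycleSet f a, cycleSet f b} : Set (Set (Fin N))).ncard ≤
      cycleCount f + 2 := by
  set U := cycleSet f a ∪ cycleSet f b
  set g := swap a b * f
  have ha : a ∈ U := Or.inl (mem_cycleSet_self f a)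
  have hb : b ∈ U := Or.inr (mem_cycleSet_self f b)
  have hfU : Set.MapsTo f U U := mapsTo_cycleSet_union f a b
  have hgU : Set.MapsTo g U U := mapsTo_swap_mul hfU ha hb
  have hfg : Set.EqOn f g Uᶜ := fun z hz => by
    have hfz : f z ∉ U := mapsTo_compl hfU hz
    exact (swap_apply_of_ne_of_ne (fun h : f z = a => hfz (h ▸ ha))
      (fun h : f z = b => hfz (h ▸ hb))).symm
  -- `f = swap a b * g`, so the union of the two `g`-cycles through `a` and `b` is `f`-invariant
  have hUg : U ⊆ cycleSet g a ∪ cycleSet g b := by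
    have hV := mapsTo_swap_mul (mapsTo_cycleSet_union g a b) (Or.inl (mem_cycleSet_self g a))
      (Or.inr (mem_cycleSet_self g b))
    rw [swap_mul_self_mul] at hV
    exact Set.union_subset (cycleSet_subset hV (Or.inl (mem_cycleSet_self g a)))
      (cycleSet_subset hV (Or.inr (mem_cycleSet_self g b)))
  have hg2 : (cycleSet g '' U).ncard ≤ 2 := by
    refine (Set.ncard_le_ncard (t := {cycleSet g a, cycleSet g b}) ?_).trans
      (ncard_pair_le _ _)
    rintro _ ⟨z, hz, rfl⟩
    rcases hUg hz with h | h
    exacts [Or.inl (cycleSet_eq_of_sameCycle h).symm, Or.inr (cycleSet_eq_of_sameCycle h).symm]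
  have hfU' : cycleSet f '' U = {cycleSet f a, cycleSet f b} := by
    rw [Set.image_union, image_cycleSet_cycleSet, image_cycleSet_cycleSet, Set.singleton_union]
  rw [cycleCount_eq_ncard_image_add hfU, cycleCount_eq_ncard_image_add hgU,
    image_cycleSet_congr (mapsTo_compl hfU) hfg, hfU']
  omega

theorem cycleCount_swap_mul_le (f : Perm (Fin N)) (a b : Fin N) :
    cycleCount (swap a b * f) ≤ cycleCount f + 1 := by
  have := cycleCount_swap_mul_add_ncard_le f a b
  have : 0 < ({cycleSet f a, cycleSet f b} : Set (Set (Fin N))).ncard :=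
    (Set.ncard_pos (Set.toFinite _)).2 (Set.insert_nonempty _ _)
  omega

theorem cycleCount_swap_mul_le_of_not_sameCycle {a b : Fin N} (h : ¬ f.SameCycle a b) :
    cycleCount (swap a b * f) ≤ cycleCount f := by
  have := cycleCount_swap_mul_add_ncard_le f a b
  rw [Set.ncard_pair fun hab => h (cycleSet_eq_iff.1 hab)] at this
  omega

theorem cycleCount_le_two {a b : Fin N} (h : ∀ z, f.SameCycle a z ∨ f.SameCycle b z) :
    cycleCount f ≤ 2 := by
  rw [cycleCount_eq_ncard_range]
  refine (Set.ncard_le_ncard (t := {cycleSet f a, cycleSet f b}) ?_).trans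
    (ncard_pair_le _ _)
  rintro _ ⟨z, rfl⟩
  exact (h z).imp (fun h => (cycleSet_eq_of_sameCycle h).symm)
    (fun h => (cycleSet_eq_of_sameCycle h).symm)

end CycleCount

section Involution

variable {ρ : Perm (Fin N)}

theorem commute_swap_apply (hρ : Involutive ρ) (u : Fin N) : Commute (swap u (ρ u)) ρ := by
  symm
  rw [Commute, SemiconjBy, mul_swap_eq_swap_mul, hρ u, swap_comm]

theorem involutive_swap_mul (hρ : Involutive ρ) (u : Fin N) : Involutive (swap u (ρ u) * ρ) := by
  intro x
  simp only [mul_apply]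
  rw [← mul_apply ρ, ← (commute_swap_apply hρ u).eq, mul_apply, swap_apply_self, hρ]

theorem card_support_swap_mul_add_two (hρ : Involutive ρ) {u : Fin N} (hu : ρ u ≠ u) :
    (swap u (ρ u) * ρ).support.card + 2 = ρ.support.card := by
  have hdisj : (swap u (ρ u)).Disjoint (swap u (ρ u) * ρ) := by
    intro z
    by_cases hz : z = u ∨ z = ρ u
    · right
      rcases hz with rfl | rfl
      · rw [mul_apply, swap_apply_right]
      · rw [mul_apply, hρ, swap_apply_left]
    · obtain ⟨hzu, hzρu⟩ := not_or.1 hz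
      exact Or.inl (swap_apply_of_ne_of_ne hzu hzρu)
  conv_rhs => rw [← swap_mul_self_mul u (ρ u) ρ]
  rw [hdisj.card_support_mul, card_support_swap hu.symm, add_comm]

theorem two_mul_cycleCount_mul_le (hρ : Involutive ρ) (σ : Perm (Fin N)) :
    2 * cycleCount (ρ * σ) ≤ 2 * cycleCount σ + ρ.support.card := by
  induction hk : ρ.support.card using Nat.strong_induction_on generalizing ρ with
  | _ k ih =>
  by_cases h1 : ρ = 1
  · simp [h1]
  obtain ⟨u, hu⟩ : ∃ u, ρ u ≠ u := not_forall.1 fun h => h1 (Perm.ext h)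
  have hcard := card_support_swap_mul_add_two hρ hu
  have hrest := ih _ (by omega) (involutive_swap_mul hρ u) rfl
  have hswap := cycleCount_swap_mul_le (swap u (ρ u) * ρ * σ) u (ρ u)
  rw [← mul_assoc, swap_mul_self_mul] at hswap
  omega

theorem inv_eq_self_of_involutive (hρ : Involutive ρ) : ρ⁻¹ = ρ :=
  Involutive.symm_eq_self_of_involutive ρ hρ

theorem cycleSet_of_involutive (hρ : Involutive ρ) (x : Fin N) : cycleSet ρ x = {x, ρ x} := by
  refine (cycleSet_subset ?_ (Set.mem_insert x _)).antisymm ?_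
  · rintro _ (rfl | rfl)
    exacts [Or.inr rfl, Or.inl (hρ _)]
  · rintro _ (rfl | rfl)
    exacts [mem_cycleSet_self ρ _, sameCycle_apply_right.2 (SameCycle.refl ρ _)]

theorem ncard_eq_two_mul_ncard_image_cycleSet (hρ : Involutive ρ) (hfix : ∀ x, ρ x ≠ x)
    {S : Set (Fin N)} (hS : Set.MapsTo ρ S S) : S.ncard = 2 * (cycleSet ρ '' S).ncard := by
  classical
  have hfiber : ∀ O ∈ S.toFinset.image (cycleSet ρ),
      {y ∈ S.toFinset | cycleSet ρ y = O}.card = 2 := by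
    intro O hO
    obtain ⟨x, hx, rfl⟩ := Finset.mem_image.1 hO
    rw [Set.mem_toFinset] at hx
    have : {y ∈ S.toFinset | cycleSet ρ y = cycleSet ρ x} = {x, ρ x} := by
      ext y
      rw [Finset.mem_filter, Set.mem_toFinset, cycleSet_eq_iff, sameCycle_comm, ← Finset.mem_coe,
        Finset.coe_pair, ← cycleSet_of_involutive hρ]
      exact ⟨And.right, fun hy => ⟨cycleSet_subset hS hx hy, hy⟩⟩
    rw [this, Finset.card_pair (hfix x).symm]
  rw [Set.ncard_eq_toFinset_card',
    Finset.card_eq_sum_card_fiberwise (f := cycleSet ρ) fun x hx => Finset.mem_image_of_mem _ hx,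
    Finset.sum_congr rfl hfiber, Finset.sum_const, smul_eq_mul, mul_comm, ← Set.ncard_coe_finset,
    Finset.coe_image, Set.coe_toFinset]

theorem two_mul_cycleCount_of_involutive (hρ : Involutive ρ) (hfix : ∀ x, ρ x ≠ x) :
    2 * cycleCount ρ = N := by
  rw [cycleCount_eq_ncard_range, ← Set.image_univ,
    ← ncard_eq_two_mul_ncard_image_cycleSet hρ hfix (Set.mapsTo_univ _ _), Set.ncard_univ,
    Nat.card_eq_fintype_card, Fintype.card_fin]

theorem card_support_of_forall_ne (hfix : ∀ x, ρ x ≠ x) : ρ.support.card = N := by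
  rw [Finset.eq_univ_of_forall fun x => mem_support.2 (hfix x), Finset.card_univ,
    Fintype.card_fin]

end Involution

section Arcs

theorem val_sub_eq_ite (a b : Fin N) :
    (a - b).val = if b.val ≤ a.val then a.val - b.val else N + a.val - b.val := by
  split_ifs with h
  · exact Fin.coe_sub_iff_le.2 h
  · exact Fin.coe_sub_iff_lt.2 (not_le.1 h)

theorem val_finRotate (z : Fin N) :
    (finRotate N z).val = if z.val + 1 = N then 0 else z.val + 1 := by
  obtain ⟨m, rfl⟩ : ∃ m, N = m + 1 := ⟨N - 1, by have := z.isLt; omega⟩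
  rw [coe_finRotate]
  simp only [Fin.ext_iff, Fin.val_last]
  split_ifs <;> omega

theorem val_finRotate_symm (z : Fin N) :
    ((finRotate N).symm z).val = if z.val = 0 then N - 1 else z.val - 1 := by
  have h := val_finRotate ((finRotate N).symm z)
  rw [apply_symm_apply] at h
  have := ((finRotate N).symm z).isLt
  split_ifs at h ⊢ <;> omega

/-- The arc of the circle `Fin N` from `x` (included) clockwise to `y` (excluded); the
differences are taken in `Fin N`, i.e. modulo `N`, so `z - x` is the clockwise distance from `x`
to `z`. -/
def cyclicIco (x y : Fin N) : Set (Fin N) := {z | z - x < y - x}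

def cyclicIcc (x y : Fin N) : Set (Fin N) := {z | z - x ≤ y - x}

variable {a b x y z : Fin N}

theorem mapsTo_swap_mul_finRotate_cyclicIco (a b : Fin N) :
    Set.MapsTo (swap a b * finRotate N) (cyclicIco a b) (cyclicIco a b) := by
  intro z hz
  have := a.isLt; have := b.isLt; have := z.isLt
  simp only [cyclicIco, Set.mem_ofPred_eq, Fin.lt_def, mul_apply, swap_apply_def] at hz ⊢
  split_ifs <;> simp only [Fin.ext_iff, val_sub_eq_ite, val_finRotate] at * <;>
    split_ifs at * <;> omega

theorem sameCycle_swap_mul_finRotate_of_mem (hz : z ∈ cyclicIco a b) :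
    (swap a b * finRotate N).SameCycle a z := by
  induction hk : (z - a).val generalizing z with
  | zero =>
    have : z = a := by
      rw [val_sub_eq_ite] at hk
      ext
      split_ifs at hk <;> omega
    rw [this]
  | succ k ih =>
    have hza : z ≠ a := by
      rintro rfl
      rw [val_sub_eq_ite, if_pos le_rfl] at hk
      omega
    have hzb : z ≠ b := fun h => lt_irrefl (b - a) (h ▸ hz)
    set w := (finRotate N).symm z
    have hw : w ∈ cyclicIco a b ∧ (w - a).val = k := by
      have := a.isLt; have := b.isLt; have := z.isLt
      rw [Ne, Fin.ext_iff] at hza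
      simp only [w, cyclicIco, Set.mem_ofPred_eq, Fin.lt_def, val_sub_eq_ite,
        val_finRotate_symm] at hz hk ⊢
      split_ifs at hz hk ⊢ <;> omega
    have hsw : (swap a b * finRotate N) w = z := by
      rw [mul_apply, apply_symm_apply, swap_apply_of_ne_of_ne hza hzb]
    exact hsw ▸ sameCycle_apply_right.2 (ih hw.1 hw.2)

theorem not_sameCycle_swap_mul_finRotate (hab : a ≠ b) :
    ¬ (swap a b * finRotate N).SameCycle a b := by
  intro h
  have ha : a ∈ cyclicIco a b := by
    show (a - a).val < (b - a).val
    rw [Ne, Fin.ext_iff] at hab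
    simp only [val_sub_eq_ite]
    split_ifs <;> omega
  exact lt_irrefl (b - a) (cycleSet_subset (mapsTo_swap_mul_finRotate_cyclicIco a b) ha h)

theorem mem_cyclicIco_or_mem_cyclicIco (hab : a ≠ b) (z : Fin N) :
    z ∈ cyclicIco a b ∨ z ∈ cyclicIco b a := by
  have := a.isLt; have := b.isLt; have := z.isLt
  simp only [cyclicIco, Set.mem_ofPred_eq, Fin.lt_def, val_sub_eq_ite]
  rw [Ne, Fin.ext_iff] at hab
  split_ifs <;> omega

theorem mem_cyclicIco_of_mem_cyclicIcc_of_ne (hz : z ∈ cyclicIcc x y) (hzy : z ≠ y) :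
    z ∈ cyclicIco x y := by
  have := x.isLt; have := y.isLt; have := z.isLt
  simp only [cyclicIco, cyclicIcc, Set.mem_ofPred_eq, Fin.lt_def, Fin.le_def, val_sub_eq_ite]
    at hz ⊢
  rw [Ne, Fin.ext_iff] at hzy
  split_ifs at hz ⊢ <;> omega

theorem mem_cyclicIco_of_notMem_cyclicIcc (hxy : x ≠ y) (hz : z ∉ cyclicIcc x y) :
    z ∈ cyclicIco y x := by
  have := x.isLt; have := y.isLt; have := z.isLt
  simp only [cyclicIco, cyclicIcc, Set.mem_ofPred_eq, Fin.lt_def, Fin.le_def, val_sub_eq_ite,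
    not_le] at hz ⊢
  rw [Ne, Fin.ext_iff] at hxy
  split_ifs at hz ⊢ <;> omega

theorem left_mem_cyclicIcc (x y : Fin N) : x ∈ cyclicIcc x y := by
  show (x - x).val ≤ (y - x).val
  simp only [val_sub_eq_ite]
  split_ifs <;> omega

theorem right_mem_cyclicIcc (x y : Fin N) : y ∈ cyclicIcc x y := le_refl (y - x)

theorem ncard_cyclicIcc [NeZero N] (x y : Fin N) : (cyclicIcc x y).ncard = (y - x).val + 1 := by
  have : cyclicIcc x y = (Equiv.subRight x) ⁻¹' Set.Iic (y - x) := rfl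
  rw [this, Set.ncard_preimage_of_injective_subset_range (Equiv.injective _)
    (by simp), ← Fin.card_Iic, ← Set.ncard_coe_finset, Finset.coe_Iic]

end Arcs

section Rotation

theorem sameCycle_finRotate (x y : Fin N) : (finRotate N).SameCycle x y := by
  have h0 : ∀ y : Fin N, (finRotate N).SameCycle ⟨0, x.pos⟩ y := by
    intro y
    induction hk : y.val generalizing y with
    | zero => exact (Fin.ext hk.symm : (⟨0, x.pos⟩ : Fin N) = y) ▸ SameCycle.refl _ _
    | succ k ih =>
      have hy : finRotate N ⟨k, by omega⟩ = y := by
        ext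
        rw [val_finRotate]
        simp only
        split_ifs <;> omega
      exact hy ▸ sameCycle_apply_right.2 (ih _ rfl)
  exact (h0 x).symm.trans (h0 y)

theorem cycleCount_finRotate [NeZero N] : cycleCount (finRotate N) = 1 := by
  have : cycleSet (finRotate N) = fun _ => Set.univ :=
    funext fun x => Set.eq_univ_of_forall (sameCycle_finRotate x)
  rw [cycleCount_eq_ncard_range, this, Set.range_const, Set.ncard_singleton]

theorem two_mul_cycleCount_mul_finRotate_le [NeZero N] {π : Perm (Fin N)} (hπ : Involutive π)
    (hfix : ∀ x, π x ≠ x) : 2 * cycleCount (π * finRotate N) ≤ N + 2 := by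
  have := two_mul_cycleCount_mul_le hπ (finRotate N)
  rw [cycleCount_finRotate, card_support_of_forall_ne hfix] at this
  omega

theorem val_intervalInvolution (z : Fin N) : (intervalInvolution N z).val =
    if z.val % 2 = 0 then min (z.val + 1) (N - 1) else z.val - 1 := rfl

theorem intervalInvolution_involutive : Involutive (intervalInvolution N) :=
  Involutive.toPerm_involutive _

theorem intervalInvolution_apply_ne (hN : Even N) (z : Fin N) : intervalInvolution N z ≠ z := by
  obtain ⟨n, rfl⟩ := hN
  have := z.isLt
  rw [Ne, Fin.ext_iff, val_intervalInvolution]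
  split_ifs <;> omega

theorem intervalInvolution_apply_of_even (hN : Even N) {z : Fin N} (hz : z.val % 2 = 0) :
    intervalInvolution N z = finRotate N z := by
  obtain ⟨n, rfl⟩ := hN
  have := z.isLt
  ext
  rw [val_intervalInvolution, val_finRotate]
  split_ifs <;> omega

theorem intervalInvolution_apply_of_odd {z : Fin N} (hz : z.val % 2 = 1) :
    intervalInvolution N z = (finRotate N).symm z := by
  ext
  rw [val_intervalInvolution, val_finRotate_symm]
  split_ifs <;> omega

theorem val_finRotate_mod_two_ne (hN : Even N) (z : Fin N) :
    (finRotate N z).val % 2 ≠ z.val % 2 := by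
  obtain ⟨n, rfl⟩ := hN
  rw [val_finRotate]
  split_ifs <;> omega

theorem succ_le_cycleCount_finRotate_mul_intervalInvolution {n : ℕ} (hn : 0 < n) :
    n + 1 ≤ cycleCount (finRotate (2 * n) * intervalInvolution (2 * n)) := by
  set f := finRotate (2 * n) * intervalInvolution (2 * n)
  set U : Set (Fin (2 * n)) := {z | z.val % 2 = 0}
  have hfU : Set.MapsTo f U U := fun z (hz : z.val % 2 = 0) => by
    have := z.isLt
    show (f z).val % 2 = 0
    rw [mul_apply, intervalInvolution_apply_of_even ⟨n, two_mul n⟩ hz, val_finRotate,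
      val_finRotate]
    split_ifs <;> omega
  have hfix : ∀ z ∈ Uᶜ, f z = z := fun z hz => by
    rw [mul_apply, intervalInvolution_apply_of_odd (Nat.mod_two_ne_zero.1 hz), apply_symm_apply]
  have hcycle : ∀ z ∈ Uᶜ, cycleSet f z = {z} := fun z hz =>
    Set.eq_singleton_iff_unique_mem.2
      ⟨mem_cycleSet_self f z, fun _ hy => (hy.eq_of_left (hfix z hz)).symm⟩
  have hodd : Uᶜ = Set.range (fun k : Fin n => (⟨2 * k + 1, by omega⟩ : Fin (2 * n))) := by
    ext z
    simp only [U, Set.mem_compl_iff, Set.mem_ofPred_eq, Set.mem_range, Fin.ext_iff]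
    refine ⟨fun hz => ⟨⟨z.val / 2, by omega⟩, by simp only; omega⟩, ?_⟩
    rintro ⟨k, hk⟩
    omega
  have hU : 0 < (cycleSet f '' U).ncard :=
    (Set.ncard_pos (Set.toFinite _)).2 ⟨_, ⟨⟨0, by omega⟩, rfl, rfl⟩⟩
  have hUc : (cycleSet f '' Uᶜ).ncard = n := by
    rw [Set.InjOn.ncard_image fun z hz w hw h => by
        rwa [hcycle z hz, hcycle w hw, Set.singleton_eq_singleton_iff] at h,
      hodd, Set.ncard_range_of_injective fun k l h => Fin.ext (by simp [Fin.ext_iff] at h; omega),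
      Nat.card_fin]
  rw [cycleCount_eq_ncard_image_add hfU]
  omega

end Rotation

theorem JointTrans.eq_univ {π ρ : Perm (Fin N)} (h : JointTrans π ρ) {S : Set (Fin N)}
    (hπ : Set.MapsTo π S S) (hρ : Set.MapsTo ρ S S) (hS : S.Nonempty) : S = Set.univ := by
  obtain ⟨x, hx⟩ := hS
  refine Set.eq_univ_of_forall fun y => ?_
  obtain ⟨g, hg, rfl⟩ := h x y
  suffices (⇑g) ⁻¹' S = S from (this.symm ▸ hx : x ∈ (⇑g) ⁻¹' S)
  induction hg using Subgroup.closure_induction with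
  | mem f hf =>
    rcases hf with rfl | rfl
    exacts [preimage_eq_of_mapsTo hπ, preimage_eq_of_mapsTo hρ]
  | one => rfl
  | mul f g _ _ hf hg => rw [coe_mul, Set.preimage_comp, hf, hg]
  | inv f _ hf =>
    nth_rewrite 1 [← hf]
    rw [← Set.preimage_comp, ← coe_mul, mul_inv_cancel, coe_one, Set.preimage_id]

theorem jointTrans_of_finRotate_apply {π ρ : Perm (Fin N)}
    (h : ∀ z, finRotate N z = π z ∨ finRotate N z = ρ z) : JointTrans π ρ := by
  intro x y
  set S := {y | ∃ g ∈ Subgroup.closure ({π, ρ} : Set (Perm (Fin N))), g x = y}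
  have hS : Set.MapsTo (finRotate N) S S := by
    rintro _ ⟨g, hg, rfl⟩
    rcases h (g x) with h' | h'
    · exact ⟨π * g, mul_mem (Subgroup.subset_closure (Or.inl rfl)) hg, h'.symm⟩
    · exact ⟨ρ * g, mul_mem (Subgroup.subset_closure (Or.inr rfl)) hg, h'.symm⟩
  exact cycleSet_subset hS ⟨1, one_mem _, rfl⟩ (sameCycle_finRotate x y)

theorem involutive_finRotate_mul_intervalInvolution_mul_inv :
    Involutive (finRotate N * intervalInvolution N * (finRotate N)⁻¹) := fun x => by
  simp only [mul_apply, coe_inv, symm_apply_apply, intervalInvolution_involutive _,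
    apply_symm_apply]

theorem finRotate_mul_intervalInvolution_mul_inv_apply_ne (hN : Even N) (x : Fin N) :
    (finRotate N * intervalInvolution N * (finRotate N)⁻¹) x ≠ x := fun h => by
  rw [mul_apply, mul_apply] at h
  exact intervalInvolution_apply_ne hN _ (eq_inv_iff_eq.2 h)

theorem jointTrans_finRotate_mul_intervalInvolution_mul_inv (hN : Even N) :
    JointTrans (finRotate N * intervalInvolution N * (finRotate N)⁻¹) (intervalInvolution N) :=
  jointTrans_of_finRotate_apply fun z => by
    rcases Nat.mod_two_eq_zero_or_one z.val with hz | hz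
    · exact Or.inr (intervalInvolution_apply_of_even hN hz).symm
    · have := val_finRotate_mod_two_ne hN ((finRotate N).symm z)
      rw [apply_symm_apply] at this
      left
      rw [mul_apply, mul_apply, coe_inv, intervalInvolution_apply_of_even hN (by omega),
        apply_symm_apply]

section Noncrossing

variable {π : Perm (Fin N)}

theorem two_mul_cycleCount_mul_finRotate_le_of_crossing (hπ : Involutive π)
    (hfix : ∀ x, π x ≠ x) {a c : Fin N} (hca : c ≠ a) (hc : c ∈ cyclicIco a (π a))
    (hd : π c ∈ cyclicIco (π a) a) : 2 * cycleCount (π * finRotate N) ≤ N := by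
  have hab : a ≠ π a := (hfix a).symm
  have hda : π c ≠ a := fun h => lt_irrefl (a - π a) (h ▸ hd)
  have hdb : π c ≠ π a := fun h => hca (hπ.injective h)
  set s := swap a (π a) * finRotate N
  have hs : cycleCount s ≤ 2 := cycleCount_le_two fun z =>
    (mem_cyclicIco_or_mem_cyclicIco hab z).imp sameCycle_swap_mul_finRotate_of_mem
      fun h => swap_comm a (π a) ▸ sameCycle_swap_mul_finRotate_of_mem h
  have hcd : ¬ s.SameCycle c (π c) := fun h => not_sameCycle_swap_mul_finRotate hab
    ((sameCycle_swap_mul_finRotate_of_mem hc).trans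
      (h.trans (swap_comm (π a) a ▸ sameCycle_swap_mul_finRotate_of_mem hd).symm))
  set π₁ := swap a (π a) * π
  have hπ₁c : π₁ c = π c := swap_apply_of_ne_of_ne hda hdb
  set π₂ := swap c (π c) * π₁
  have hπ₁ : Involutive π₁ := involutive_swap_mul hπ a
  have hπ₂ : Involutive π₂ := by
    have := involutive_swap_mul hπ₁ c
    rwa [hπ₁c] at this
  have hcard : π₂.support.card + 4 = N := by
    have h₁ : π₁.support.card + 2 = π.support.card := card_support_swap_mul_add_two hπ (hfix a)
    have h₂ : π₂.support.card + 2 = π₁.support.card := by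
      have := card_support_swap_mul_add_two hπ₁ (u := c) (by rw [hπ₁c]; exact hfix c)
      rwa [hπ₁c] at this
    have h₀ := card_support_of_forall_ne hfix
    omega
  have hfactor : π * finRotate N = π₂ * (swap c (π c) * s) := by
    have h₁ : π₁ * swap a (π a) = π := by
      show swap a (π a) * π * swap a (π a) = π
      rw [(commute_swap_apply hπ a).eq, mul_swap_mul_self]
    have h₂ : π₂ * swap c (π c) = π₁ := by
      have := (commute_swap_apply hπ₁ c).eq
      rw [hπ₁c] at this
      show swap c (π c) * π₁ * swap c (π c) = π₁
      rw [this, mul_swap_mul_self]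
    rw [← mul_assoc, ← mul_assoc, h₂, h₁]
  have := two_mul_cycleCount_mul_le hπ₂ (swap c (π c) * s)
  have := cycleCount_swap_mul_le_of_not_sameCycle hcd
  rw [hfactor]
  omega

theorem mapsTo_cyclicIcc_of_lt_two_mul_cycleCount (hπ : Involutive π) (hfix : ∀ x, π x ≠ x)
    (h : N < 2 * cycleCount (π * finRotate N)) (x : Fin N) :
    Set.MapsTo π (cyclicIcc x (π x)) (cyclicIcc x (π x)) := by
  intro z hz
  by_contra hπz
  have hzx : z ≠ x := by
    rintro rfl
    exact hπz (right_mem_cyclicIcc _ _)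
  have hzπx : z ≠ π x := by
    rintro rfl
    rw [hπ x] at hπz
    exact hπz (left_mem_cyclicIcc _ _)
  exact h.not_ge (two_mul_cycleCount_mul_finRotate_le_of_crossing hπ hfix hzx
    (mem_cyclicIco_of_mem_cyclicIcc_of_ne hz hzπx)
    (mem_cyclicIco_of_notMem_cyclicIcc (hfix x).symm hπz))

theorem val_mod_two_ne_of_mapsTo_cyclicIcc [NeZero N] (hN : Even N) (hπ : Involutive π)
    (hfix : ∀ x, π x ≠ x) {x : Fin N} (h : Set.MapsTo π (cyclicIcc x (π x)) (cyclicIcc x (π x))) :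
    (π x).val % 2 ≠ x.val % 2 := by
  have hcard := ncard_eq_two_mul_ncard_image_cycleSet hπ hfix h
  rw [ncard_cyclicIcc, val_sub_eq_ite] at hcard
  obtain ⟨n, rfl⟩ := hN
  split_ifs at hcard <;> omega

theorem mapsTo_intervalInvolution_cyclicIcc (hN : Even N) {x y : Fin N} (hx : x.val % 2 = 0)
    (hy : y.val % 2 = 1) :
    Set.MapsTo (intervalInvolution N) (cyclicIcc x y) (cyclicIcc x y) := by
  obtain ⟨n, rfl⟩ := hN
  intro z hz
  have := x.isLt; have := y.isLt; have := z.isLt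
  simp only [cyclicIcc, Set.mem_ofPred_eq, Fin.le_def, val_sub_eq_ite, val_intervalInvolution]
    at hz ⊢
  split_ifs at hz ⊢ <;> omega

theorem eq_finRotate_symm_of_mem_cyclicIcc {x y : Fin N}
    (h : (finRotate N).symm x ∈ cyclicIcc x y) : y = (finRotate N).symm x := by
  have := x.isLt; have := y.isLt
  simp only [cyclicIcc, Set.mem_ofPred_eq, Fin.le_def, val_sub_eq_ite, val_finRotate_symm] at h
  ext
  rw [val_finRotate_symm]
  split_ifs at h ⊢ <;> omega

theorem mul_finRotate_eq_finRotate_mul_intervalInvolution [NeZero N] (hN : Even N)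
    (hπ : Involutive π) (hfix : ∀ x, π x ≠ x) (hcount : N < 2 * cycleCount (π * finRotate N))
    (htrans : JointTrans π (intervalInvolution N)) :
    π * finRotate N = finRotate N * intervalInvolution N := by
  have hrot := val_finRotate_mod_two_ne hN
  have harc := mapsTo_cyclicIcc_of_lt_two_mul_cycleCount hπ hfix hcount
  -- for even `x` the arc `[x, π x]` is also `I`-invariant, hence the whole circle
  have heven : ∀ x, x.val % 2 = 0 → π x = (finRotate N).symm x := fun x hx =>
    eq_finRotate_symm_of_mem_cyclicIcc <| (htrans.eq_univ (harc x)
      (mapsTo_intervalInvolution_cyclicIcc hN hx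
        (by have := val_mod_two_ne_of_mapsTo_cyclicIcc hN hπ hfix (harc x); omega))
      ⟨x, left_mem_cyclicIcc _ _⟩) ▸ Set.mem_univ _
  have hodd : ∀ x, x.val % 2 = 1 → π x = finRotate N x := fun x hx => by
    have := heven (finRotate N x) (by have := hrot x; omega)
    rw [symm_apply_apply] at this
    exact (congrArg π this).symm.trans (hπ _)
  refine Perm.ext fun z => ?_
  have := hrot z
  rw [mul_apply, mul_apply]
  rcases Nat.mod_two_eq_zero_or_one z.val with hz | hz
  · rw [intervalInvolution_apply_of_even hN hz, hodd _ (by omega)]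
  · rw [intervalInvolution_apply_of_odd hz, heven _ (by omega), symm_apply_apply,
      apply_symm_apply]

end Noncrossing

theorem stmt_12 (n : ℕ) (hn : 1 ≤ n) :
    ∀ π : Equiv.Perm (Fin (2 * n)),
      ((∀ x, π (π x) = x ∧ π x ≠ x) ∧
        cycleCount π + cycleCount (π⁻¹ * finRotate (2 * n)) = 2 * n + 1 ∧
        JointTrans π (intervalInvolution (2 * n))) ↔
      π = finRotate (2 * n) * intervalInvolution (2 * n) * (finRotate (2 * n))⁻¹ := by
  have : NeZero (2 * n) := ⟨by omega⟩
  have hN : Even (2 * n) := even_two_mul n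
  intro π
  constructor
  · rintro ⟨hpair, hcount, htrans⟩
    have hπ : Involutive π := fun x => (hpair x).1
    have hfix : ∀ x, π x ≠ x := fun x => (hpair x).2
    have := two_mul_cycleCount_of_involutive hπ hfix
    rw [inv_eq_self_of_involutive hπ] at hcount
    exact eq_mul_inv_of_mul_eq
      (mul_finRotate_eq_finRotate_mul_intervalInvolution hN hπ hfix (by omega) htrans)
  · rintro rfl
    have hσ := involutive_finRotate_mul_intervalInvolution_mul_inv (N := 2 * n)
    have hfix := finRotate_mul_intervalInvolution_mul_inv_apply_ne hN
    refine ⟨fun x => ⟨hσ x, hfix x⟩, ?_, jointTrans_finRotate_mul_intervalInvolution_mul_inv hN⟩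
    have h₁ := two_mul_cycleCount_of_involutive hσ hfix
    have h₂ := two_mul_cycleCount_mul_finRotate_le hσ hfix
    have h₃ := succ_le_cycleCount_finRotate_mul_intervalInvolution hn
    rw [inv_mul_cancel_right] at h₂
    rw [inv_eq_self_of_involutive hσ, inv_mul_cancel_right]
    omega
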